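/- arXiv:0803.3969 — 11 statements merged into one kernel-verified Lean document; each statement's English description precedes it below -/
import Mathlib

section
/- In any meadow, (-x)⁻¹ = -(x⁻¹) for all x. -/
class Meadow (M : Type*) extends CommRing M, Inv M where
  inv_inv : ∀ x : M, x⁻¹⁻¹ = x
  ril : ∀ x : M, x * (x * x⁻¹) = x

theorem meadow_inv_neg {M : Type*} [Meadow M] (x : M) : (-x)⁻¹ = -(x⁻¹) := by
  have ii := Meadow.inv_inv (M := M)
  set y := (-x)⁻¹ with hy
  have h1 : (-x) * ((-x) * y) = -x := Meadow.ril (-x)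
  have h2 : y * (y * (-x)) = y := by
    have := Meadow.ril y; rwa [show y⁻¹ = -x from by rw [hy, ii]] at this
  have hx : x * (x * x⁻¹) = x := Meadow.ril x
  have hxi : x⁻¹ * (x⁻¹ * x) = x⁻¹ := by
    have := Meadow.ril x⁻¹; rwa [ii] at this
  have hstar : (x * x⁻¹) * y = -x⁻¹ := by
    linear_combination (x⁻¹ * x⁻¹) * h1 - (y * x⁻¹) * hx - hxi
  have hstar2 : ((-x) * y) * x⁻¹ = -y := by
    linear_combination (y * y) * hx - (x⁻¹ * y) * h1 - h2
  have hef : (x * x⁻¹) * ((-x) * y) = x * x⁻¹ := by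
    linear_combination (-x) * hstar
  have hfe : ((-x) * y) * (x * x⁻¹) = (-x) * y := by
    linear_combination x * hstar2
  have hE : (x * x⁻¹) = (-x) * y := by
    linear_combination hfe - hef
  linear_combination hstar - y * hE - h2
end

section
/- In any meadow, (x·y)⁻¹ = x⁻¹·y⁻¹ for all x, y. -/
lemma meadow_inv_ril {M : Type*} [Meadow M] (x : M) : x⁻¹ * (x⁻¹ * x) = x⁻¹ := by
  have h := Meadow.ril (x⁻¹)
  rwa [Meadow.inv_inv] at h

lemma meadow_weak_inv_unique {M : Type*} [Meadow M] (a z w : M)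
    (h1 : a * z * a = a) (h2 : z * a * z = z)
    (h3 : a * w * a = a) (h4 : w * a * w = w) : z = w := by
  have key : a * z = a * w := by
    have e1 : (a * w) * (a * z) = a * z := by
      calc (a * w) * (a * z) = (a * w * a) * z := by ring
        _ = a * z := by rw [h3]
    have e2 : (a * w) * (a * z) = a * w := by
      calc (a * w) * (a * z) = (a * z * a) * w := by ring
        _ = a * w := by rw [h1]
    rw [← e1, e2]
  calc z = z * a * z := h2.symm
    _ = z * (a * z) := by ring
    _ = z * (a * w) := by rw [key]
    _ = w * (a * z) := by ring
    _ = w * (a * w) := by rw [key]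
    _ = w * a * w := by ring
    _ = w := h4

theorem meadow_inv_mul {M : Type*} [Meadow M] (x y : M) : (x * y)⁻¹ = x⁻¹ * y⁻¹ := by
  apply meadow_weak_inv_unique (x * y)
  · linear_combination Meadow.ril (x * y)
  · linear_combination meadow_inv_ril (x * y)
  · linear_combination (y * (y * y⁻¹)) * Meadow.ril x + x * Meadow.ril y
  · linear_combination (y⁻¹ * (y⁻¹ * y)) * meadow_inv_ril x + x⁻¹ * meadow_inv_ril y
end

section
/- In a meadow, the cancellation axiom (x ≠ 0 and x·y = x·z implies y = z) holds if and only if the Inverse Law holds (x ≠ 0 implies x·x⁻¹ = 1). -/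
theorem meadow_cancel_iff_IL {M : Type*} [Meadow M] :
    (∀ x y z : M, x ≠ 0 → x * y = x * z → y = z) ↔
    (∀ x : M, x ≠ 0 → x * x⁻¹ = 1) := by
  constructor
  · intro hc x hx
    apply hc x _ 1 hx
    rw [mul_one]
    exact Meadow.ril x
  · intro hIL x y z hx h
    have h1 : x * x⁻¹ = 1 := hIL x hx
    calc y = (x * x⁻¹) * y := by rw [h1, one_mul]
    _ = x⁻¹ * (x * y) := by ring
    _ = x⁻¹ * (x * z) := by rw [h]
    _ = (x * x⁻¹) * z := by ring
    _ = z := by rw [h1, one_mul]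
end

section
/- In a meadow, the Inverse Law (x ≠ 0 implies x·x⁻¹ = 1) holds if and only if the meadow has no proper zero divisors (x·y = 0 implies x = 0 or y = 0), assuming 0 ≠ 1. -/
theorem meadow_IL_iff_noZeroDiv {M : Type*} [Meadow M] (h01 : (0 : M) ≠ 1) :
    (∀ x : M, x ≠ 0 → x * x⁻¹ = 1) ↔
    (∀ x y : M, x * y = 0 → x = 0 ∨ y = 0) := by
  constructor
  · intro IL x y hxy
    by_cases hx : x = 0
    · exact Or.inl hx
    · right
      have : x⁻¹ * (x * y) = x⁻¹ * 0 := by rw [hxy]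
      calc y = (x * x⁻¹) * y := by rw [IL x hx, one_mul]
        _ = 0 := by rw [mul_comm x x⁻¹, mul_assoc, hxy, mul_zero]
  · intro nzd x hx
    have h := Meadow.ril x
    have : x * (x * x⁻¹ - 1) = 0 := by ring_nf; linear_combination h
    rcases nzd _ _ this with h' | h'
    · exact absurd h' hx
    · exact sub_eq_zero.mp h'
end

section
/- In a meadow, for any elements s, t, u, v, one has s·t⁻¹ + u·v⁻¹ = 0ₜ·u·v⁻¹ + 1ₜ·(0ᵥ·s·t⁻¹ + 1ᵥ·(s·v + t·u)·(t·v)⁻¹), where 1ₓ := x·x⁻¹ and 0ₓ := 1 - x·x⁻¹. -/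
namespace MeadowAux

variable {M : Type*} [Meadow M]

lemma inv_quasi (x : M) : x⁻¹ * (x⁻¹ * x) = x⁻¹ := by
  have h := Meadow.ril (x⁻¹ : M)
  rwa [Meadow.inv_inv] at h

lemma quasi_unique (p z w : M) (ha : z * p * z = z) (ha' : p * z * p = p)
    (hb : w * p * w = w) (hb' : p * w * p = p) : z = w := by
  have hz : z = z * p * w := by linear_combination (p*w - 1) * ha - z^2 * hb'
  have hw : w = w * p * z := by linear_combination (p*z - 1) * hb - w^2 * ha'
  have hzp : z * p = w * p := by linear_combination p * hz - p * hw
  linear_combination hz - hw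

lemma mul_inv (x y : M) : (x * y)⁻¹ = x⁻¹ * y⁻¹ := by
  have hx := Meadow.ril x
  have hy := Meadow.ril y
  have hx' := inv_quasi x
  have hy' := inv_quasi y
  have hp := Meadow.ril (x * y)
  have hp' := inv_quasi (x * y)
  refine quasi_unique (x * y) _ _ ?_ ?_ ?_ ?_
  · linear_combination hp'
  · linear_combination hp
  · linear_combination y⁻¹^2 * y * hx' + x⁻¹ * hy'
  · linear_combination y^2 * y⁻¹ * hx + x * hy            -- p w p = p

end MeadowAux

theorem meadow_sum_smf {M : Type*} [Meadow M] (s t u v : M) :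
    s * t⁻¹ + u * v⁻¹ =
      (1 - t * t⁻¹) * u * v⁻¹ +
      (t * t⁻¹) * ((1 - v * v⁻¹) * s * t⁻¹ +
        (v * v⁻¹) * ((s * v + t * u) * (t * v)⁻¹)) := by
  rw [MeadowAux.mul_inv]
  have h1 := Meadow.ril t
  have h2 := MeadowAux.inv_quasi t
  have h3 := Meadow.ril v
  have h4 := MeadowAux.inv_quasi v
  linear_combination (-s) * h2 - u * t⁻¹ * v * v⁻¹^2 * h1 - u * t * t⁻¹ * h4
    - s * t * t⁻¹^2 * v⁻¹ * h3
end

section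
/- In a meadow, (0ₜ·S + 1ₜ·T)⁻¹ = 0ₜ·S⁻¹ + 1ₜ·T⁻¹ for all elements t, S, T, where 1ₜ := t·t⁻¹ and 0ₜ := 1 - 1ₜ. -/
namespace MeadowAux

variable {M : Type*} [Meadow M]

lemma ril' (x : M) : x * x⁻¹ * x = x := by
  have := Meadow.ril x; linear_combination this

lemma inv_ril (x : M) : x⁻¹ * x * x⁻¹ = x⁻¹ := by
  have := Meadow.ril x⁻¹
  rw [Meadow.inv_inv] at this
  linear_combination this

lemma quasi_unique_s9 (a b c : M) (h1 : a * b * a = a) (h2 : b * a * b = b)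
    (h3 : a * c * a = a) (h4 : c * a * c = c) : b = c := by
  have hbc : a * b = a * c := by
    calc a * b = (a * c * a) * b := by rw [h3]
    _ = (a * b * a) * c := by ring
    _ = a * c := by rw [h1]
  calc b = b * a * b := h2.symm
  _ = b * (a * c) := by rw [← hbc]; ring
  _ = c * (a * b) := by ring
  _ = c * (a * c) := by rw [hbc]
  _ = c := by linear_combination h4

lemma inv_eq (a c : M) (h3 : a * c * a = a) (h4 : c * a * c = c) : a⁻¹ = c :=
  quasi_unique_s9 a a⁻¹ c (ril' a) (inv_ril a) h3 h4

lemma idem_inv (p : M) (hp : p * p = p) : p⁻¹ = p := by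
  apply inv_eq <;> rw [hp, hp]

lemma e_idem (t : M) : (t * t⁻¹) * (t * t⁻¹) = t * t⁻¹ := by
  calc (t * t⁻¹) * (t * t⁻¹) = (t * t⁻¹ * t) * t⁻¹ := by ring
  _ = t * t⁻¹ := by rw [ril']

lemma key (e S T : M) (hee : e * e = e) :
    ((1 - e) * S + e * T)⁻¹ = (1 - e) * S⁻¹ + e * T⁻¹ := by
  have hf : (1 - e) * (1 - e) = 1 - e := by linear_combination hee
  have hei : e⁻¹ = e := idem_inv e hee
  have hfi : (1 - e)⁻¹ = 1 - e := idem_inv _ hf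
  set a : M := (1 - e) * S + e * T with ha
  have h1 : e * a = e * T := by rw [ha]; linear_combination (T - S) * hee
  have h2 : (1 - e) * a = (1 - e) * S := by rw [ha]; linear_combination (S - T) * hee
  have h1' : e * a⁻¹ = e * T⁻¹ := by
    have := congrArg Inv.inv h1
    rwa [MeadowAux.mul_inv, MeadowAux.mul_inv, hei] at this
  have h2' : (1 - e) * a⁻¹ = (1 - e) * S⁻¹ := by
    have := congrArg Inv.inv h2
    rwa [MeadowAux.mul_inv, MeadowAux.mul_inv, hfi] at this
  linear_combination h1' + h2'

end MeadowAux

open MeadowAux in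
theorem meadow_inv_smf {M : Type*} [Meadow M] (t S T : M) :
    ((1 - t * t⁻¹) * S + (t * t⁻¹) * T)⁻¹ =
      (1 - t * t⁻¹) * S⁻¹ + (t * t⁻¹) * T⁻¹ :=
  key (t * t⁻¹) S T (e_idem t)
end

section
/- In a signed meadow, s(x)·(1 - s(x))·(1 + s(x)) = 0 for all x. -/
class SignedMeadow (M : Type*) extends Meadow M where
  s : M → M
  s_oneX : ∀ x : M, s (x * x⁻¹) = x * x⁻¹
  s_zeroX : ∀ x : M, s (1 - x * x⁻¹) = 1 - x * x⁻¹
  s_neg_one : s (-1) = -1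
  s_inv : ∀ x : M, s x⁻¹ = s x
  s_mul : ∀ x y : M, s (x * y) = s x * s y
  s_add : ∀ x y : M, (1 - (s x - s y) * (s x - s y)⁻¹) * (s (x + y) - s x) = 0

theorem sm_s_cubic_zero {M : Type*} [SignedMeadow M] (x : M) :
    SignedMeadow.s x * (1 - SignedMeadow.s x) * (1 + SignedMeadow.s x) = 0 := by
  set s := (SignedMeadow.s : M → M) with hs
  -- s(x)^2 = x * x⁻¹
  have h2 : s x * s x = x * x⁻¹ := by
    have := SignedMeadow.s_mul x x⁻¹
    rw [SignedMeadow.s_oneX, SignedMeadow.s_inv] at this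
    exact this.symm
  -- idempotency of x * x⁻¹
  have hid : (x * x⁻¹) * (x * x⁻¹) = x * x⁻¹ := by
    have := Meadow.ril x
    calc (x * x⁻¹) * (x * x⁻¹) = (x * (x * x⁻¹)) * x⁻¹ := by ring
    _ = x * x⁻¹ := by rw [this]
  -- reducedness
  have hred : ∀ y : M, y * y = 0 → y = 0 := by
    intro y h
    calc y = y * (y * y⁻¹) := (Meadow.ril y).symm
    _ = (y * y) * y⁻¹ := by ring
    _ = 0 := by rw [h]; ring
  have ht : s x * (1 - x * x⁻¹) = 0 := by
    apply hred
    linear_combination ((1 - x * x⁻¹) * (1 - x * x⁻¹)) * h2 + (x * x⁻¹ - 1) * hid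
  linear_combination (-(s x)) * h2 + ht
end

section
/- In a signed meadow, the sign function is idempotent: s(s(x)) = s(x) for all x. -/
section Aux
open SignedMeadow
variable {M : Type*}

lemma md_inv_tripotent [Meadow M] (b : M) (h : b * b * b = b) : b⁻¹ = b := by
  have h1 : b⁻¹ * (b⁻¹ * b⁻¹⁻¹) = b⁻¹ := Meadow.ril _
  rw [Meadow.inv_inv] at h1
  have h2 : b * (b * b⁻¹) = b := Meadow.ril b
  linear_combination (-1 : M) * h1 - (b⁻¹ * b⁻¹) * h + (b * b⁻¹ + 1) * h2

lemma md_one_inv [Meadow M] : (1 : M)⁻¹ = 1 := by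
  linear_combination Meadow.ril (1 : M)

lemma sm_s_one [SignedMeadow M] : s (1 : M) = 1 := by
  have := s_oneX (1 : M)
  rw [md_one_inv] at this
  simpa using this

lemma sm_s_zero [SignedMeadow M] : s (0 : M) = 0 := by
  have := s_oneX (0 : M)
  simpa using this

lemma sm_two_inv [SignedMeadow M] : (2 : M) * 2⁻¹ = 1 := by
  have h := s_add (1 : M) (-1)
  rw [sm_s_one, s_neg_one] at h
  have e1 : (1 : M) - -1 = 2 := by ring
  rw [e1] at h
  have e2 : (1 : M) + -1 = 0 := by ring
  rw [e2, sm_s_zero] at h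
  linear_combination h

end Aux

theorem sm_s_idem {M : Type*} [SignedMeadow M] (x : M) :
    SignedMeadow.s (SignedMeadow.s x) = SignedMeadow.s x := by
  open SignedMeadow in
  set a := s x with ha
  have haa : a * a = x * x⁻¹ := by
    have : s x * s x⁻¹ = x * x⁻¹ := by rw [← s_mul, s_oneX]
    rw [s_inv] at this
    exact this
  have ha3 : a * a * a = a := by
    have h1 : s (x * (x * x⁻¹)) = s x * (x * x⁻¹) := by rw [s_mul, s_oneX]
    rw [Meadow.ril] at h1
    calc a * a * a = s x * (x * x⁻¹) := by rw [← haa]; ring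
    _ = s x := h1.symm
  have h2 : (2 : M) * 2⁻¹ = 1 := sm_two_inv
  set ep : M := 2⁻¹ * (a * a + a) with hep
  set em : M := 2⁻¹ * (a * a - a) with hem
  have hp_idem : ep * ep = ep := by
    rw [hep]
    linear_combination (2⁻¹ * 2⁻¹ * (a + 2)) * ha3 + (2⁻¹ * (a * a + a)) * h2
  have hm_idem : em * em = em := by
    rw [hem]
    linear_combination (2⁻¹ * 2⁻¹ * (a - 2)) * ha3 + (2⁻¹ * (a * a - a)) * h2
  have hainv : a⁻¹ = a := md_inv_tripotent a ha3
  have hsaa : s a * s a = a * a := by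
    have h0 := s_oneX a
    rw [hainv] at h0
    rw [← s_mul]
    exact h0
  have saE : s a = a * a * s a := by
    have h0 := congrArg s ha3
    rw [s_mul, s_mul, hsaa] at h0
    linear_combination -h0
  have sep : s ep = ep := by
    have hinv : ep⁻¹ = ep := md_inv_tripotent ep (by linear_combination (ep + 1) * hp_idem)
    have h0 := s_oneX ep
    rw [hinv, hp_idem] at h0
    exact h0
  have sem : s em = em := by
    have hinv : em⁻¹ = em := md_inv_tripotent em (by linear_combination (em + 1) * hm_idem)
    have h0 := s_oneX em
    rw [hinv, hm_idem] at h0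
    exact h0
  have hpe : a * ep = ep := by rw [hep]; linear_combination 2⁻¹ * ha3
  have hme : a * em = -em := by rw [hem]; linear_combination 2⁻¹ * ha3
  have hsp : s a * ep = ep := by
    calc s a * ep = s a * s ep := by rw [sep]
    _ = s (a * ep) := (s_mul a ep).symm
    _ = s ep := by rw [hpe]
    _ = ep := sep
  have hsm : s a * em = -em := by
    calc s a * em = s a * s em := by rw [sem]
    _ = s (a * em) := (s_mul a em).symm
    _ = s (-1 * em) := by rw [hme]; ring_nf
    _ = s (-1) * s em := s_mul _ _
    _ = -em := by rw [s_neg_one, sem]; ring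
  have hsum : ep + em = a * a := by rw [hep, hem]; linear_combination (a * a) * h2
  have hdiff : ep - em = a := by rw [hep, hem]; linear_combination a * h2
  calc s a = a * a * s a := saE
  _ = s a * (ep + em) := by rw [hsum]; ring
  _ = s a * ep + s a * em := by ring
  _ = ep - em := by rw [hsp, hsm]; ring
  _ = a := hdiff
end

section
/- The sign function is not definable by a meadow term in the zero-totalized rationals: there is no unary function f : ℚ → ℚ built from 0, 1, addition, multiplication, negation, and the zero-totalized inverse (0⁻¹ = 0) such that f(q) equals the sign of q for all rationals q. -/
inductive MTerm : Type
  | var : MTerm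
  | zero : MTerm
  | one : MTerm
  | add : MTerm → MTerm → MTerm
  | mul : MTerm → MTerm → MTerm
  | neg : MTerm → MTerm
  | inv : MTerm → MTerm

noncomputable def MTerm.eval : MTerm → ℚ → ℚ
  | .var, q => q
  | .zero, _ => 0
  | .one, _ => 1
  | .add a b, q => a.eval q + b.eval q
  | .mul a b, q => a.eval q * b.eval q
  | .neg a, q => -(a.eval q)
  | .inv a, q => (a.eval q)⁻¹

open Polynomial in
lemma mterm_ratfun (t : MTerm) :
    ∃ p q : Polynomial ℚ, q ≠ 0 ∧
      ∀ x : ℚ, q.eval x ≠ 0 → t.eval x = p.eval x / q.eval x := by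
  induction t with
  | var => exact ⟨X, 1, one_ne_zero, fun x _ => by simp [MTerm.eval]⟩
  | zero => exact ⟨0, 1, one_ne_zero, fun x _ => by simp [MTerm.eval]⟩
  | one => exact ⟨1, 1, one_ne_zero, fun x _ => by simp [MTerm.eval]⟩
  | add a b ha hb =>
    obtain ⟨p1, q1, hq1, h1⟩ := ha
    obtain ⟨p2, q2, hq2, h2⟩ := hb
    refine ⟨p1 * q2 + p2 * q1, q1 * q2, mul_ne_zero hq1 hq2, fun x hx => ?_⟩
    simp only [eval_mul, eval_add] at *
    have h1' := h1 x (left_ne_zero_of_mul hx)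
    have h2' := h2 x (right_ne_zero_of_mul hx)
    rw [MTerm.eval, h1', h2',
      div_add_div _ _ (left_ne_zero_of_mul hx) (right_ne_zero_of_mul hx)]
    ring_nf
  | mul a b ha hb =>
    obtain ⟨p1, q1, hq1, h1⟩ := ha
    obtain ⟨p2, q2, hq2, h2⟩ := hb
    refine ⟨p1 * p2, q1 * q2, mul_ne_zero hq1 hq2, fun x hx => ?_⟩
    simp only [eval_mul] at *
    rw [MTerm.eval, h1 x (left_ne_zero_of_mul hx), h2 x (right_ne_zero_of_mul hx)]
    field_simp
  | neg a ha =>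
    obtain ⟨p, q, hq, h⟩ := ha
    exact ⟨-p, q, hq, fun x hx => by rw [MTerm.eval, h x hx]; simp [neg_div]⟩
  | inv a ha =>
    obtain ⟨p, q, hq, h⟩ := ha
    by_cases hp : p = 0
    · refine ⟨0, q, hq, fun x hx => ?_⟩
      rw [MTerm.eval, h x hx, hp]
      simp
    · refine ⟨q * q, q * p, mul_ne_zero hq hp, fun x hx => ?_⟩
      rw [eval_mul] at hx
      have hqx := left_ne_zero_of_mul hx
      have hpx := right_ne_zero_of_mul hx
      rw [MTerm.eval, h x hqx]
      rw [eval_mul, eval_mul]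
      rw [inv_div]
      field_simp

open Polynomial in
theorem sign_not_definable :
    ¬ ∃ t : MTerm, ∀ q : ℚ,
      t.eval q = if q < 0 then -1 else if q = 0 then 0 else 1 := by
  rintro ⟨t, ht⟩
  obtain ⟨p, q, hq, hpq⟩ := mterm_ratfun t
  have hqfin : {x : ℚ | q.IsRoot x}.Finite := Polynomial.finite_setOf_isRoot hq
  -- p = q from positive side
  have hpos : p = q := by
    by_contra hne
    have hfin : {x : ℚ | (p - q).IsRoot x}.Finite :=
      Polynomial.finite_setOf_isRoot (sub_ne_zero.mpr hne)
    have hinf : ((Set.Ioi (0:ℚ)) \ ({x : ℚ | q.IsRoot x} ∪ {x | (p - q).IsRoot x})).Infinite :=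
      Set.Infinite.diff (Set.Ioi_infinite 0) (hqfin.union hfin)
    obtain ⟨x, hx⟩ := hinf.nonempty
    obtain ⟨hx0, hxr⟩ := hx
    simp only [Set.mem_union, Set.mem_setOf_eq, not_or] at hxr
    have hqx : q.eval x ≠ 0 := hxr.1
    have h1 : t.eval x = 1 := by
      rw [ht x]
      have hx0' : (0:ℚ) < x := hx0
      rw [if_neg (by linarith), if_neg (by linarith)]
    have := hpq x hqx
    rw [h1] at this
    have : p.eval x = q.eval x := by
      field_simp at this
      linarith
    exact hxr.2 (by simp [Polynomial.IsRoot, this])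
  -- p = -q from negative side
  have hneg : p = -q := by
    by_contra hne
    have hne' : p + q ≠ 0 := fun h => hne (by linear_combination h)
    have hfin : {x : ℚ | (p + q).IsRoot x}.Finite :=
      Polynomial.finite_setOf_isRoot hne'
    have hinf : ((Set.Iio (0:ℚ)) \ ({x : ℚ | q.IsRoot x} ∪ {x | (p + q).IsRoot x})).Infinite :=
      Set.Infinite.diff (Set.Iio_infinite 0) (hqfin.union hfin)
    obtain ⟨x, hx⟩ := hinf.nonempty
    obtain ⟨hx0, hxr⟩ := hx
    simp only [Set.mem_union, Set.mem_setOf_eq, not_or] at hxr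
    have hqx : q.eval x ≠ 0 := hxr.1
    have h1 : t.eval x = -1 := by
      rw [ht x]
      have hx0' : x < (0:ℚ) := hx0
      rw [if_pos hx0']
    have := hpq x hqx
    rw [h1] at this
    have : p.eval x = -q.eval x := by
      field_simp at this
      linarith
    exact hxr.2 (by simp [Polynomial.IsRoot, this])
  have : q = 0 := by
    have := hpos ▸ hneg
    have h2 : q + q = 0 := by linear_combination this
    exact add_self_eq_zero.mp h2
  exact hq this
end

section
/- If two unary functions ℚ → ℚ, each defined by a term over the meadow signature (built from a variable, 0, 1, +, ·, -, and the zero-totalized inverse with 0⁻¹ = 0), agree at infinitely many rational arguments, then they agree at all but finitely many rational arguments. -/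
lemma mterm_ratfunc (t : MTerm) : ∃ p q : Polynomial ℚ, q ≠ 0 ∧
    {x : ℚ | t.eval x ≠ p.eval x / q.eval x}.Finite := by
  induction t with
  | var => exact ⟨.X, 1, one_ne_zero, by simp [MTerm.eval]⟩
  | zero => exact ⟨0, 1, one_ne_zero, by simp [MTerm.eval]⟩
  | one => exact ⟨1, 1, one_ne_zero, by simp [MTerm.eval]⟩
  | add a b iha ihb =>
    obtain ⟨p1, q1, hq1, h1⟩ := iha
    obtain ⟨p2, q2, hq2, h2⟩ := ihb
    refine ⟨p1 * q2 + p2 * q1, q1 * q2, mul_ne_zero hq1 hq2, ?_⟩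
    apply Set.Finite.subset ((h1.union h2).union
      ((Polynomial.finite_setOf_isRoot hq1).union (Polynomial.finite_setOf_isRoot hq2)))
    intro x hx
    by_contra hmem
    simp only [Set.mem_union, Set.mem_setOf_eq, Polynomial.IsRoot, not_or, not_not] at hmem
    obtain ⟨⟨e1, e2⟩, r1, r2⟩ := hmem
    apply hx
    simp only [Set.mem_setOf_eq, MTerm.eval, e1, e2, Polynomial.eval_add, Polynomial.eval_mul]
    field_simp
  | mul a b iha ihb =>
    obtain ⟨p1, q1, hq1, h1⟩ := iha
    obtain ⟨p2, q2, hq2, h2⟩ := ihb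
    refine ⟨p1 * p2, q1 * q2, mul_ne_zero hq1 hq2, ?_⟩
    apply Set.Finite.subset (h1.union h2)
    intro x hx
    by_contra hmem
    simp only [Set.mem_union, Set.mem_setOf_eq, not_or, not_not] at hmem
    obtain ⟨e1, e2⟩ := hmem
    apply hx
    simp only [Set.mem_setOf_eq, MTerm.eval, e1, e2, Polynomial.eval_mul]
    rw [div_mul_div_comm]
  | neg a iha =>
    obtain ⟨p1, q1, hq1, h1⟩ := iha
    refine ⟨-p1, q1, hq1, ?_⟩
    apply Set.Finite.subset h1
    intro x hx
    by_contra hmem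
    simp only [Set.mem_setOf_eq, not_not] at hmem
    apply hx
    simp [Set.mem_setOf_eq, MTerm.eval, hmem, neg_div]
  | inv a iha =>
    obtain ⟨p1, q1, hq1, h1⟩ := iha
    by_cases hp : p1 = 0
    · refine ⟨0, 1, one_ne_zero, ?_⟩
      apply Set.Finite.subset h1
      intro x hx
      by_contra hmem
      simp only [Set.mem_setOf_eq, not_not] at hmem
      apply hx
      simp [MTerm.eval, hmem, hp]
    · refine ⟨q1, p1, hp, ?_⟩
      apply Set.Finite.subset h1
      intro x hx
      by_contra hmem
      simp only [Set.mem_setOf_eq, not_not] at hmem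
      apply hx
      simp [MTerm.eval, hmem, inv_div]

theorem infinite_agree_ae_agree (t u : MTerm)
    (h : {q : ℚ | t.eval q = u.eval q}.Infinite) :
    {q : ℚ | t.eval q ≠ u.eval q}.Finite := by
  obtain ⟨p1, q1, hq1, h1⟩ := mterm_ratfunc t
  obtain ⟨p2, q2, hq2, h2⟩ := mterm_ratfunc u
  set r : Polynomial ℚ := p1 * q2 - p2 * q1 with hr
  have hr0 : r = 0 := by
    by_contra hr0
    have hfin2 := ((h1.union h2).union
      ((Polynomial.finite_setOf_isRoot hq1).union (Polynomial.finite_setOf_isRoot hq2))).union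
      (Polynomial.finite_setOf_isRoot hr0)
    obtain ⟨x, hx, hnot⟩ := (h.diff hfin2).nonempty
    simp only [Set.mem_union, Set.mem_setOf_eq, not_or, not_not, Polynomial.IsRoot] at hnot
    obtain ⟨⟨⟨e1, e2⟩, z1, z2⟩, z3⟩ := hnot
    apply z3
    have hx' : t.eval x = u.eval x := hx
    rw [e1, e2, div_eq_div_iff z1 z2] at hx'
    simp [hr, hx']
  apply Set.Finite.subset ((h1.union h2).union
      ((Polynomial.finite_setOf_isRoot hq1).union (Polynomial.finite_setOf_isRoot hq2)))
  intro x hx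
  by_contra hmem
  simp only [Set.mem_union, Set.mem_setOf_eq, not_or, not_not, Polynomial.IsRoot] at hmem
  obtain ⟨⟨e1, e2⟩, z1, z2⟩ := hmem
  apply hx
  have : p1.eval x * q2.eval x = p2.eval x * q1.eval x := by
    have := congrArg (Polynomial.eval x) hr0
    simp only [hr, Polynomial.eval_sub, Polynomial.eval_mul, Polynomial.eval_zero] at this
    linarith
  show t.eval x = u.eval x
  rw [e1, e2, div_eq_div_iff z1 z2, this]
end

section
/- For any unary function h : ℚ → ℚ defined by a term over the signed-meadow signature (built from a variable, 0, 1, +, ·, -, zero-totalized inverse, and the sign function), there exists a rational bound r and a unary function g defined by a term over the meadow signature without the sign function such that h(x) = g(x) for all x > r. -/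
inductive STerm : Type
  | var : STerm
  | zero : STerm
  | one : STerm
  | add : STerm → STerm → STerm
  | mul : STerm → STerm → STerm
  | neg : STerm → STerm
  | inv : STerm → STerm
  | sgn : STerm → STerm

noncomputable def STerm.eval : STerm → ℚ → ℚ
  | .var, q => q
  | .zero, _ => 0
  | .one, _ => 1
  | .add a b, q => a.eval q + b.eval q
  | .mul a b, q => a.eval q * b.eval q
  | .neg a, q => -(a.eval q)
  | .inv a, q => (a.eval q)⁻¹
  | .sgn a, q => if a.eval q < 0 then -1 else if a.eval q = 0 then 0 else 1

open Polynomial Filter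

lemma poly_sign (p : ℚ[X]) (hp : p ≠ 0) :
    ∃ r : ℚ, (∀ x > r, p.eval x < 0) ∨ (∀ x > r, 0 < p.eval x) := by
  rcases le_or_gt p.degree 0 with hd | hd
  · have hc0 : p = Polynomial.C (p.coeff 0) := Polynomial.eq_C_of_degree_le_zero hd
    have hc : p.coeff 0 ≠ 0 := fun h => hp (by rw [hc0, h]; simp)
    rcases hc.lt_or_gt with h | h
    · exact ⟨0, Or.inl fun x _ => by rw [hc0]; simpa using h⟩
    · exact ⟨0, Or.inr fun x _ => by rw [hc0]; simpa using h⟩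
  · rcases le_or_gt p.leadingCoeff 0 with hl | hl
    · have ht := p.tendsto_atBot_of_leadingCoeff_nonpos hd hl
      obtain ⟨a, ha⟩ := eventually_atTop.mp (ht.eventually (eventually_lt_atBot 0))
      exact ⟨a, Or.inl fun x hx => ha x hx.le⟩
    · have ht := p.tendsto_atTop_of_leadingCoeff_nonneg hd hl.le
      obtain ⟨a, ha⟩ := eventually_atTop.mp (ht.eventually (eventually_gt_atTop 0))
      exact ⟨a, Or.inr fun x hx => ha x hx.le⟩

lemma poly_ne (p : ℚ[X]) (hp : p ≠ 0) : ∃ r : ℚ, ∀ x > r, p.eval x ≠ 0 := by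
  obtain ⟨r, h | h⟩ := poly_sign p hp
  · exact ⟨r, fun x hx => (h x hx).ne⟩
  · exact ⟨r, fun x hx => (h x hx).ne'⟩

lemma mterm_ratfunc_s19 (g : MTerm) :
    ∃ (p q : ℚ[X]) (r : ℚ), ∀ x > r, q.eval x ≠ 0 ∧ g.eval x = p.eval x / q.eval x := by
  induction g with
  | var => exact ⟨X, 1, 0, fun x _ => ⟨by simp, by simp [MTerm.eval]⟩⟩
  | zero => exact ⟨0, 1, 0, fun x _ => ⟨by simp, by simp [MTerm.eval]⟩⟩
  | one => exact ⟨1, 1, 0, fun x _ => ⟨by simp, by simp [MTerm.eval]⟩⟩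
  | add a b iha ihb =>
    obtain ⟨p1, q1, r1, h1⟩ := iha
    obtain ⟨p2, q2, r2, h2⟩ := ihb
    refine ⟨p1 * q2 + p2 * q1, q1 * q2, max r1 r2, fun x hx => ?_⟩
    obtain ⟨hq1, he1⟩ := h1 x (lt_of_le_of_lt (le_max_left _ _) hx)
    obtain ⟨hq2, he2⟩ := h2 x (lt_of_le_of_lt (le_max_right _ _) hx)
    refine ⟨by simp [hq1, hq2], ?_⟩
    simp only [MTerm.eval, he1, he2, Polynomial.eval_add, Polynomial.eval_mul]
    rw [div_add_div _ _ hq1 hq2]; ring_nf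
  | mul a b iha ihb =>
    obtain ⟨p1, q1, r1, h1⟩ := iha
    obtain ⟨p2, q2, r2, h2⟩ := ihb
    refine ⟨p1 * p2, q1 * q2, max r1 r2, fun x hx => ?_⟩
    obtain ⟨hq1, he1⟩ := h1 x (lt_of_le_of_lt (le_max_left _ _) hx)
    obtain ⟨hq2, he2⟩ := h2 x (lt_of_le_of_lt (le_max_right _ _) hx)
    refine ⟨by simp [hq1, hq2], ?_⟩
    simp only [MTerm.eval, he1, he2, Polynomial.eval_mul]
    rw [div_mul_div_comm]
  | neg a ih =>
    obtain ⟨p, q, r, h⟩ := ih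
    refine ⟨-p, q, r, fun x hx => ?_⟩
    obtain ⟨hq, he⟩ := h x hx
    exact ⟨hq, by simp [MTerm.eval, he, neg_div]⟩
  | inv a ih =>
    obtain ⟨p, q, r, h⟩ := ih
    by_cases hp : p = 0
    · refine ⟨0, 1, r, fun x hx => ⟨by simp, ?_⟩⟩
      simp [MTerm.eval, (h x hx).2, hp]
    · obtain ⟨r', hr'⟩ := poly_ne p hp
      refine ⟨q, p, max r r', fun x hx => ?_⟩
      obtain ⟨hq, he⟩ := h x (lt_of_le_of_lt (le_max_left _ _) hx)
      refine ⟨hr' x (lt_of_le_of_lt (le_max_right _ _) hx), ?_⟩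
      simp [MTerm.eval, he, inv_div]

lemma mterm_sgn (g : MTerm) :
    ∃ (r : ℚ) (g' : MTerm), ∀ x > r,
      (if g.eval x < 0 then (-1 : ℚ) else if g.eval x = 0 then 0 else 1) = g'.eval x := by
  obtain ⟨p, q, r, h⟩ := mterm_ratfunc_s19 g
  by_cases hp : p = 0
  · refine ⟨r, .zero, fun x hx => ?_⟩
    obtain ⟨hq, he⟩ := h x hx
    simp [MTerm.eval, he, hp]
  · have hq0 : q ≠ 0 := by
      intro hq
      exact (h (r + 1) (lt_add_one r)).1 (by simp [hq])
    obtain ⟨rp, hps⟩ := poly_sign p hp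
    obtain ⟨rq, hqs⟩ := poly_sign q hq0
    set R := max r (max rp rq) with hR
    have hle : ∀ x > R, x > r ∧ x > rp ∧ x > rq := fun x hx =>
      ⟨lt_of_le_of_lt (le_max_left _ _) hx,
       lt_of_le_of_lt (le_trans (le_max_left _ _) (le_max_right _ _)) hx,
       lt_of_le_of_lt (le_trans (le_max_right _ _) (le_max_right _ _)) hx⟩
    rcases hps with hps | hps <;> rcases hqs with hqs | hqs
    · refine ⟨R, .one, fun x hx => ?_⟩
      obtain ⟨h1, h2, h3⟩ := hle x hx
      have hv : 0 < g.eval x := by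
        rw [(h x h1).2]; exact div_pos_of_neg_of_neg (hps x h2) (hqs x h3)
      simp [MTerm.eval, hv.not_gt, hv.ne']
    · refine ⟨R, .neg .one, fun x hx => ?_⟩
      obtain ⟨h1, h2, h3⟩ := hle x hx
      have hv : g.eval x < 0 := by
        rw [(h x h1).2]; exact div_neg_of_neg_of_pos (hps x h2) (hqs x h3)
      simp [MTerm.eval, hv]
    · refine ⟨R, .neg .one, fun x hx => ?_⟩
      obtain ⟨h1, h2, h3⟩ := hle x hx
      have hv : g.eval x < 0 := by
        rw [(h x h1).2]; exact div_neg_of_pos_of_neg (hps x h2) (hqs x h3)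
      simp [MTerm.eval, hv]
    · refine ⟨R, .one, fun x hx => ?_⟩
      obtain ⟨h1, h2, h3⟩ := hle x hx
      have hv : 0 < g.eval x := by
        rw [(h x h1).2]; exact div_pos (hps x h2) (hqs x h3)
      simp [MTerm.eval, hv.not_gt, hv.ne']

theorem sterm_eventually_meadow (h : STerm) :
    ∃ (r : ℚ) (g : MTerm), ∀ x : ℚ, x > r → h.eval x = g.eval x := by
  induction h with
  | var => exact ⟨0, .var, fun x _ => rfl⟩
  | zero => exact ⟨0, .zero, fun x _ => rfl⟩
  | one => exact ⟨0, .one, fun x _ => rfl⟩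
  | add a b iha ihb =>
    obtain ⟨r1, g1, h1⟩ := iha
    obtain ⟨r2, g2, h2⟩ := ihb
    refine ⟨max r1 r2, .add g1 g2, fun x hx => ?_⟩
    simp [STerm.eval, MTerm.eval,
      h1 x (lt_of_le_of_lt (le_max_left _ _) hx),
      h2 x (lt_of_le_of_lt (le_max_right _ _) hx)]
  | mul a b iha ihb =>
    obtain ⟨r1, g1, h1⟩ := iha
    obtain ⟨r2, g2, h2⟩ := ihb
    refine ⟨max r1 r2, .mul g1 g2, fun x hx => ?_⟩
    simp [STerm.eval, MTerm.eval,
      h1 x (lt_of_le_of_lt (le_max_left _ _) hx),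
      h2 x (lt_of_le_of_lt (le_max_right _ _) hx)]
  | neg a ih =>
    obtain ⟨r, g, hg⟩ := ih
    exact ⟨r, .neg g, fun x hx => by simp [STerm.eval, MTerm.eval, hg x hx]⟩
  | inv a ih =>
    obtain ⟨r, g, hg⟩ := ih
    exact ⟨r, .inv g, fun x hx => by simp [STerm.eval, MTerm.eval, hg x hx]⟩
  | sgn a ih =>
    obtain ⟨r, g, hg⟩ := ih
    obtain ⟨r', g', hg'⟩ := mterm_sgn g
    refine ⟨max r r', g', fun x hx => ?_⟩
    rw [STerm.eval, hg x (lt_of_le_of_lt (le_max_left _ _) hx)]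
    exact hg' x (lt_of_le_of_lt (le_max_right _ _) hx)
end
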